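/- arXiv:2306.13715 — 12 statements merged into one kernel-verified Lean document; each statement's English description precedes it below -/
import Mathlib

section
/- For every frame L there exist a complete Boolean algebra M and an interior operator □ on M such that the poset O(M) of open elements of the MT-algebra (M, □), with the order inherited from M, is order-isomorphic to L. (That is, the assignment (M, □) ↦ O(M) from MT-algebras to frames is essentially surjective.) -/
universe u

/-- An MT-algebra: a complete Boolean algebra equipped with an interior operator. -/
structure MTAlg (M : Type u) [CompleteBooleanAlgebra M] where
  box : M → M
  box_top : box ⊤ = ⊤
  box_inf : ∀ a b : M, box (a ⊓ b) = box a ⊓ box b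
  box_le : ∀ a : M, box a ≤ a
  box_idem : ∀ a : M, box a ≤ box (box a)

namespace MTAlg

variable {M : Type u} [CompleteBooleanAlgebra M] (T : MTAlg M)

/-- The closure operator `◇a = (□(aᶜ))ᶜ`. -/
def dia (a : M) : M := (T.box aᶜ)ᶜ

/-- An element is open if `□a = a`. -/
def IsOp (a : M) : Prop := T.box a = a

/-- An element is closed if `◇a = a`. -/
def IsCl (a : M) : Prop := T.dia a = a

/-- The set `O(M)` of open elements. -/
def opens : Set M := {a | T.IsOp a}

/-- The set `C(M)` of closed elements. -/
def closeds : Set M := {a | T.IsCl a}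

/-- A subset join-generates `M` if every element of `M` is a supremum of a subset of it. -/
def JoinGenerates (S : Set M) : Prop := ∀ a : M, ∃ B ⊆ S, a = sSup B

theorem box_mono {a b : M} (h : a ≤ b) : T.box a ≤ T.box b := by
  have hab : a ⊓ b = a := inf_eq_left.mpr h
  calc T.box a = T.box (a ⊓ b) := by rw [hab]
    _ = T.box a ⊓ T.box b := T.box_inf a b
    _ ≤ T.box b := inf_le_right

theorem isOp_sSup {S : Set M} (h : ∀ a ∈ S, T.IsOp a) : T.IsOp (sSup S) := by
  refine le_antisymm (T.box_le _) (sSup_le fun a ha => ?_)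
  calc a = T.box a := (h a ha).symm
    _ ≤ T.box (sSup S) := T.box_mono (le_sSup ha)

theorem atom_le_sSup {x : M} (hx : IsAtom x) {S : Set M} (h : x ≤ sSup S) :
    ∃ s ∈ S, x ≤ s := by
  by_contra hc
  push_neg at hc
  have h2 : ∀ b ∈ S, x ⊓ b = ⊥ := by
    intro b hb
    rcases hx.le_iff.mp (inf_le_left : x ⊓ b ≤ x) with h' | h'
    · exact h'
    · exact absurd (h' ▸ inf_le_right) (hc b hb)
  have h3 : x ⊓ sSup S = ⊥ := by
    rw [inf_sSup_eq]
    simp only [iSup_eq_bot]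
    intro b hb
    exact h2 b hb
  have hx' : x = ⊥ := by
    rw [inf_eq_left.mpr h] at h3
    exact h3
  exact hx.1 hx'

/-- `η(a)` : the set of atoms below `a`. -/
def eta (a : M) : Set {x : M // IsAtom x} := {x | (x : M) ≤ a}

/-- The topology `τ = {η(a) | a ∈ O(M)}` on the set of atoms of `M`. -/
def atomTopology : TopologicalSpace {x : M // IsAtom x} where
  IsOpen U := ∃ a : M, T.IsOp a ∧ U = eta a
  isOpen_univ := ⟨⊤, T.box_top, by ext x; simp [eta]⟩
  isOpen_inter := by
    rintro U V ⟨a, ha, rfl⟩ ⟨b, hb, rfl⟩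
    refine ⟨a ⊓ b, ?_, ?_⟩
    · show T.box (a ⊓ b) = a ⊓ b
      rw [T.box_inf, ha, hb]
    · ext x
      simp [eta, le_inf_iff]
  isOpen_sUnion := by
    intro C hC
    refine ⟨sSup {a | T.IsOp a ∧ eta a ∈ C}, T.isOp_sSup (fun a ha => ha.1), ?_⟩
    ext x
    constructor
    · rintro ⟨U, hU, hxU⟩
      obtain ⟨a, ha, rfl⟩ := hC U hU
      exact le_trans hxU (le_sSup ⟨ha, hU⟩)
    · intro hx
      obtain ⟨s, hs, hxs⟩ := atom_le_sSup x.2 hx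
      exact ⟨eta s, hs.2, hxs⟩

/-- A completely prime filter of the frame `O(M)` (with arbitrary suprema computed in `M`). -/
structure IsCPF (p : Set M) : Prop where
  subset_opens : p ⊆ T.opens
  top_mem : ⊤ ∈ p
  bot_notMem : ⊥ ∉ p
  mem_of_le : ∀ a ∈ p, ∀ b ∈ T.opens, a ≤ b → b ∈ p
  inf_mem : ∀ a ∈ p, ∀ b ∈ p, a ⊓ b ∈ p
  prime : ∀ S ⊆ T.opens, sSup S ∈ p → ∃ s ∈ S, s ∈ p

/-- The underlying set of `θ(x) = {a ∈ O(M) | x ≤ a}`. -/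
def thetaSet (x : M) : Set M := {a | T.IsOp a ∧ x ≤ a}

/-- An element is saturated if it is an infimum of a set of open elements. -/
def IsSat (a : M) : Prop := ∃ S ⊆ T.opens, a = sInf S

/-- Weakly locally closed: the infimum of a saturated element and a closed element. -/
def IsWLC (a : M) : Prop := ∃ s c : M, T.IsSat s ∧ T.IsCl c ∧ a = s ⊓ c

/-- Locally closed: the infimum of an open element and a closed element. -/
def IsLC (a : M) : Prop := ∃ u c : M, T.IsOp u ∧ T.IsCl c ∧ a = u ⊓ c

/-- `M` is a `T₀`-algebra if the weakly locally closed elements join-generate `M`. -/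
def T0 : Prop := JoinGenerates {a | T.IsWLC a}

/-- `M` is a `T_{1/2}`-algebra if the locally closed elements join-generate `M`. -/
def THalf : Prop := JoinGenerates {a | T.IsLC a}

/-- `M` is a `T₁`-algebra if the closed elements join-generate `M`. -/
def T1 : Prop := JoinGenerates T.closeds

/-- A join-irreducible element of `C(M)`. -/
def JoinIrred (p : M) : Prop :=
  T.IsCl p ∧ p ≠ ⊥ ∧ ∀ a b : M, T.IsCl a → T.IsCl b → p = a ⊔ b → p = a ∨ p = b

/-- `M` is weakly sober if every join-irreducible element of `C(M)` is `◇x` for some atom `x`. -/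
def WeaklySober : Prop := ∀ p : M, T.JoinIrred p → ∃ x : M, IsAtom x ∧ p = T.dia x

/-- `M` is sober if it is weakly sober and a `T₀`-algebra. -/
def Sober : Prop := T.WeaklySober ∧ T.T0

/-- `a ∈ GC(M)` : `a` is approximated from above by regular closed elements. -/
def IsGC (a : M) : Prop := a = sInf {b | ∃ c : M, a ≤ T.box c ∧ b = T.dia (T.box c)}

/-- `M` is a Hausdorff (T₂) algebra if `GC(M)` join-generates `M`. -/
def Hausdorff : Prop := JoinGenerates {a | T.IsGC a}

/-- `a ◁ b` iff `◇a ≤ □b`. -/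
def tri (a b : M) : Prop := T.dia a ≤ T.box b

/-- `M` is a regular (T₃) algebra. -/
def Regular : Prop :=
  T.T1 ∧ ∀ a : M, T.IsOp a → a = sSup {b | T.IsOp b ∧ T.tri b a}

/-- `a ◁◁ b` : there is a family `(c_p)` indexed by `p ∈ ℚ ∩ [0,1]` interpolating
between `a` and `b` with `c_p ◁ c_q` whenever `p < q`. -/
def triQ (a b : M) : Prop :=
  ∃ c : ℚ → M, a ≤ c 0 ∧ c 1 ≤ b ∧
    ∀ p q : ℚ, 0 ≤ p → p < q → q ≤ 1 → T.tri (c p) (c q)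

/-- `M` is a completely regular (T₃½) algebra. -/
def CompletelyRegular : Prop :=
  T.T1 ∧ ∀ a : M, T.IsOp a → a = sSup {b | T.IsOp b ∧ T.triQ b a}

/-- The pseudocomplement of `b` in the frame `O(M)`. -/
def pstarO (b : M) : M := sSup {u | T.IsOp u ∧ u ⊓ b = ⊥}

/-- The rather-below relation `b ≺ a` in the frame `O(M)`. -/
def precO (b a : M) : Prop := T.pstarO b ⊔ a = ⊤

/-- The completely-below relation `b ≺≺ a` in the frame `O(M)`. -/
def precQO (b a : M) : Prop :=
  ∃ c : ℚ → M, (∀ p : ℚ, 0 ≤ p → p ≤ 1 → T.IsOp (c p)) ∧ b ≤ c 0 ∧ c 1 ≤ a ∧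
    ∀ p q : ℚ, 0 ≤ p → p < q → q ≤ 1 → T.precO (c p) (c q)

/-- The frame `O(M)` is completely regular. -/
def FrameCompletelyRegular : Prop :=
  ∀ a : M, T.IsOp a → a = sSup {b | T.IsOp b ∧ T.precQO b a}

/-- `M` is a normal (T₄) algebra. -/
def Normal : Prop :=
  T.T1 ∧ ∀ c d : M, T.IsCl c → T.IsCl d → c ⊓ d = ⊥ →
    ∃ a b : M, T.IsOp a ∧ T.IsOp b ∧ a ⊓ b = ⊥ ∧ c ≤ a ∧ d ≤ b

end MTAlg


/-- The frame `L` is realized by the MT-algebra `(M, □)`: the poset of open elements of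
`M`, with the order inherited from `M`, is order-isomorphic to `L`. -/
def RealizesFrame (L : Type u) [Order.Frame L] (M : Type u) [CompleteBooleanAlgebra M]
    (T : MTAlg M) : Prop :=
  Nonempty (L ≃o {a : M // T.IsOp a})

/-!
Funayama's theorem does the work: every frame `L` embeds into a complete Boolean algebra by a map
preserving finite meets and arbitrary joins. Send `a` to the closed nucleus `x ↦ a ⊔ x` in the
frame of nuclei on `L`. It is complemented there (by the open nucleus `x ↦ a ⇨ x`), so it is a
regular element, and the regular elements of a frame form a complete Boolean algebra. The map is
left adjoint to evaluation at `⊥`, hence preserves joins. Given such an embedding `e` with right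
adjoint `r`, the composite `□ = e ∘ r` is an interior operator whose open elements are exactly the
image of `e`.
-/

namespace Heyting.Regular

variable {α : Type*} [Order.Frame α]

-- Both structures take their lattice operations from `gi`, so they agree definitionally.
instance : CompleteBooleanAlgebra (Regular α) :=
  { Regular.instBooleanAlgebra, gi.liftCompleteLattice with }

end Heyting.Regular

namespace Nucleus

variable {X : Type*} [Order.Frame X]

def closedOf (a : X) : Nucleus X where
  toFun x := a ⊔ x
  map_inf' := sup_inf_left a
  idempotent' x := (sup_left_idem a x).le
  le_apply' _ := le_sup_right

def openOf (a : X) : Nucleus X where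
  toFun x := a ⇨ x
  map_inf' := himp_inf_distrib a
  idempotent' _ := by simp only [himp_himp, inf_idem, le_refl]
  le_apply' _ := le_himp

lemma closedOf_le_iff {a : X} {n : Nucleus X} : closedOf a ≤ n ↔ a ≤ n ⊥ :=
  ⟨fun h => le_sup_left.trans (h ⊥), fun h _ => sup_le (h.trans (n.monotone bot_le)) n.le_apply⟩

lemma isCompl_closedOf_openOf (a : X) : IsCompl (closedOf a) (openOf a) where
  disjoint := disjoint_iff_inf_le.2 fun x => calc
    (a ⊔ x) ⊓ (a ⇨ x) = a ⊓ (a ⇨ x) ⊔ x ⊓ (a ⇨ x) := inf_sup_right ..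
    _ ≤ x := sup_le inf_himp_le inf_le_left
  codisjoint n hc ho x := calc
    ⊤ = a ⇨ n x := (himp_eq_top_iff.2 ((closedOf_le_iff.1 hc).trans (n.monotone bot_le))).symm
    _ ≤ n (n x) := ho (n x)
    _ = n x := n.idempotent x

lemma isRegular_closedOf (a : X) : Heyting.IsRegular (closedOf a) := by
  rw [Heyting.IsRegular, (isCompl_closedOf_openOf a).compl_eq,
    (isCompl_closedOf_openOf a).symm.compl_eq]

def closedRegular (a : X) : Heyting.Regular (Nucleus X) := ⟨closedOf a, isRegular_closedOf a⟩

lemma gc_closedRegular : GaloisConnection (closedRegular (X := X)) fun n => (n : Nucleus X) ⊥ :=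
  fun _ _ => closedOf_le_iff

def closedRegularHom : FrameHom X (Heyting.Regular (Nucleus X)) where
  toFun := closedRegular
  map_inf' a b := Heyting.Regular.coe_injective <| ext fun x => sup_inf_right a b x
  map_top' := Heyting.Regular.coe_injective <| ext fun x => top_sup_eq x
  map_sSup' _ := gc_closedRegular.l_sSup.trans sSup_image.symm

lemma closedRegularHom_injective : Function.Injective (closedRegularHom (X := X)) :=
  fun a b h => by
    have h_bot : a ⊔ ⊥ = b ⊔ ⊥ :=
      congr_arg (fun m : Heyting.Regular (Nucleus X) => (m : Nucleus X) ⊥) h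
    simpa using h_bot

end Nucleus

theorem gc_sSup_setOf_map_le {F α β : Type*} [CompleteLattice α] [CompleteLattice β]
    [FunLike F α β] [sSupHomClass F α β] (e : F) :
    GaloisConnection e fun b => sSup {a | e a ≤ b} := fun _ _ =>
  ⟨fun h => le_sSup h, fun h => (OrderHomClass.mono e h).trans <| by
    rw [map_sSup]; exact sSup_le <| by rintro _ ⟨c, hc, rfl⟩; exact hc⟩

namespace MTAlg

variable {L M : Type u} [Order.Frame L] [CompleteBooleanAlgebra M]

def ofFrameHom (e : FrameHom L M) : MTAlg M where
  box m := e (sSup {a | e a ≤ m})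
  box_top := by rw [(gc_sSup_setOf_map_le e).u_top, map_top]
  box_inf _ _ := by rw [(gc_sSup_setOf_map_le e).u_inf, map_inf]
  box_le _ := (gc_sSup_setOf_map_le e).l_u_le _
  box_idem _ := ((gc_sSup_setOf_map_le e).l_u_l_eq_l _).ge

theorem isOp_ofFrameHom_iff {e : FrameHom L M} {m : M} :
    (ofFrameHom e).IsOp m ↔ m ∈ Set.range e :=
  ⟨fun h => ⟨_, h⟩, by rintro ⟨a, rfl⟩; exact (gc_sSup_setOf_map_le e).l_u_l_eq_l a⟩

theorem realizesFrame_ofFrameHom {e : FrameHom L M} (he : Function.Injective e) :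
    RealizesFrame L M (ofFrameHom e) :=
  let emb : L ↪o M := OrderEmbedding.ofMapLEIff e fun _ _ =>
    ⟨fun h => inf_eq_left.1 (he (by rw [map_inf, inf_eq_left.2 h])), (OrderHomClass.mono e ·)⟩
  ⟨emb.orderIso.trans (OrderIso.setCongr _ _ (Set.ext fun _ => isOp_ofFrameHom_iff.symm))⟩

end MTAlg

/-- for every frame `L` there exist a complete Boolean algebra `M` and an
interior operator `□` on `M` such that `O(M)` is order-isomorphic to `L`. -/
theorem statement1 (L : Type u) [Order.Frame L] :
    ∃ (M : Type u) (inst : CompleteBooleanAlgebra M) (T : @MTAlg M inst),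
      @RealizesFrame L _ M inst T :=
  ⟨_, inferInstance, _, MTAlg.realizesFrame_ofFrameHom Nucleus.closedRegularHom_injective⟩
end

section
/- Let (M, □) be an MT-algebra whose underlying complete Boolean algebra is atomic. Then the frame O(M) is spatial: for all a, b ∈ O(M) with a ≰ b there exists a completely prime filter of O(M) containing a but not containing b. -/
universe u

/-- if the underlying complete Boolean algebra of an MT-algebra is atomic,
then the frame `O(M)` is spatial. -/
theorem statement2 {M : Type u} [CompleteBooleanAlgebra M] [IsAtomic M] (T : MTAlg M) :
    ∀ a b : M, a ∈ T.opens → b ∈ T.opens → ¬ a ≤ b →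
      ∃ p : Set M, T.IsCPF p ∧ a ∈ p ∧ b ∉ p := by

  intro a b ha hb hab
  have hne : a ⊓ bᶜ ≠ ⊥ := by
    intro h
    rw [← sdiff_eq] at h
    exact hab (sdiff_eq_bot_iff.mp h)
  obtain h | ⟨x, hx, hxle⟩ := eq_bot_or_exists_atom_le (a ⊓ bᶜ)
  · exact absurd h hne
  have hxa : x ≤ a := hxle.trans inf_le_left
  have hxbc : x ≤ bᶜ := hxle.trans inf_le_right
  refine ⟨{u | T.IsOp u ∧ x ≤ u}, ?_, ⟨ha, hxa⟩, ?_⟩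
  · refine ⟨fun u hu => hu.1, ⟨T.box_top, le_top⟩, ?_, ?_, ?_, ?_⟩
    · rintro ⟨-, hxb⟩
      exact hx.1 (le_bot_iff.mp hxb)
    · rintro u ⟨-, hxu⟩ v hv huv
      exact ⟨hv, hxu.trans huv⟩
    · rintro u ⟨hu, hxu⟩ v ⟨hv, hxv⟩
      exact ⟨by show T.box (u ⊓ v) = u ⊓ v; rw [T.box_inf, hu, hv], le_inf hxu hxv⟩
    · rintro S hS ⟨-, hxs⟩
      obtain ⟨s, hs, hxle⟩ := MTAlg.atom_le_sSup hx hxs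
      exact ⟨s, hs, hS hs, hxle⟩
  · rintro ⟨-, hxb⟩
    have : x ≤ b ⊓ bᶜ := le_inf hxb hxbc
    rw [inf_compl_eq_bot] at this
    exact hx.1 (le_bot_iff.mp this)
end

section
/- If (M, □) is a T0-algebra, then the topological space at(M) (with the topology τ) is a T0-space. -/
universe u

/-! An atom `x` of a `T₀`-algebra is itself weakly locally closed, `x = s ⊓ c`. An atom `y` lying
in the same opens as `x` lies below the saturated `s`, and below the closed `c` since otherwise it
would lie in the open `cᶜ`, which `x` avoids. Hence `y ≤ x`, so `y = x`. -/

namespace MTAlg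

variable {M : Type u} [CompleteBooleanAlgebra M] {T : MTAlg M}

theorem IsCl.isOp_compl {c : M} (hc : T.IsCl c) : T.IsOp cᶜ :=
  (compl_eq_comm.mp hc).symm

theorem IsWLC.le_of_forall_isOp_iff {w x y : M} (hw : T.IsWLC w) (hx : x ≠ ⊥) (hy : IsAtom y)
    (hxy : ∀ a, T.IsOp a → (x ≤ a ↔ y ≤ a)) (hxw : x ≤ w) : y ≤ w := by
  obtain ⟨s, c, ⟨S, hS, rfl⟩, hc, rfl⟩ := hw
  have hys : y ≤ sInf S := le_sInf fun a ha =>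
    (hxy a (hS ha)).1 (hxw.trans (inf_le_left.trans (sInf_le ha)))
  have hyc : y ≤ c := by
    by_contra hyc
    have hxc : x ≤ cᶜ :=
      (hxy cᶜ hc.isOp_compl).2 (le_compl_iff_disjoint_right.2 (hy.not_le_iff_disjoint.1 hyc))
    exact hx ((le_compl_iff_disjoint_right.1 hxc).eq_bot_of_le (hxw.trans inf_le_right))
  exact le_inf hys hyc

theorem T0.isWLC_of_isAtom (hT : T.T0) {x : M} (hx : IsAtom x) : T.IsWLC x := by
  obtain ⟨B, hB, hxB⟩ := hT x
  obtain ⟨b, hbB, hxb⟩ := hx.le_sSup.1 hxB.le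
  have hbx : b = x := le_antisymm (hxB ▸ le_sSup hbB) hxb
  exact hbx ▸ hB hbB

variable (T) in
theorem inseparable_atomTopology_iff {x y : {z : M // IsAtom z}} :
    @Inseparable _ T.atomTopology x y ↔ ∀ a, T.IsOp a → ((x : M) ≤ a ↔ (y : M) ≤ a) := by
  let := T.atomTopology
  rw [inseparable_iff_forall_isOpen]
  constructor
  · exact fun h a ha => h _ ⟨a, ha, rfl⟩
  · rintro h U ⟨a, ha, rfl⟩
    exact h a ha

end MTAlg

/-- if `M` is a `T₀`-algebra, then the space of atoms of `M` (with the
topology `τ`) is a T₀-space. -/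
theorem statement4 {M : Type u} [CompleteBooleanAlgebra M] (T : MTAlg M) (hT0 : T.T0) :
    @T0Space {z : M // IsAtom z} T.atomTopology := by
  let := T.atomTopology
  refine (t0Space_iff_inseparable _).2 fun x y hxy => ?_
  have hyx : (y : M) ≤ x := (hT0.isWLC_of_isAtom x.2).le_of_forall_isOp_iff x.2.1 y.2
    (T.inseparable_atomTopology_iff.1 hxy) le_rfl
  exact Subtype.ext ((x.2.le_iff_eq y.2.1).1 hyx).symm
end

section
/- Let (M, □) be a sober MT-algebra. Then for every join-irreducible element p of C(M) there exists a unique atom x of M such that p = ◇x. -/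
universe u

/-- in a sober MT-algebra, every join-irreducible element of `C(M)` is the
closure of a unique atom. -/
theorem statement6 {M : Type u} [CompleteBooleanAlgebra M] (T : MTAlg M)
    (hsob : T.Sober) :
    ∀ p : M, T.JoinIrred p → ∃! x : M, IsAtom x ∧ p = T.dia x := by
  intro p hp
  obtain ⟨x, hx, hpx⟩ := hsob.1 p hp
  refine ⟨x, ⟨hx, hpx⟩, ?_⟩
  rintro y ⟨hy, hpy⟩
  have hdxy : T.dia y = T.dia x := hpy ▸ hpx
  -- x is weakly locally closed (from T0)
  obtain ⟨B, hB, hxB⟩ := hsob.2 x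
  have hxle : x ≤ sSup B := le_of_eq hxB
  obtain ⟨b, hbB, hxb⟩ := MTAlg.atom_le_sSup hx hxle
  have hbx : b ≤ x := hxB ▸ le_sSup hbB
  have hbeq : b = x := le_antisymm hbx hxb
  obtain ⟨s, c, ⟨S, hS, hsS⟩, hc, hbsc⟩ := hB hbB
  have hxsc : x = s ⊓ c := hbeq ▸ hbsc
  -- y ≤ ◇y = ◇x
  have hle_dia : ∀ a : M, a ≤ T.dia a := by
    intro a
    have := T.box_le aᶜ
    calc a = aᶜᶜ := (compl_compl a).symm
      _ ≤ (T.box aᶜ)ᶜ := compl_le_compl this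
  have hdia_mono : ∀ a c : M, a ≤ c → T.dia a ≤ T.dia c := by
    intro a c h
    exact compl_le_compl (T.box_mono (compl_le_compl h))
  -- y ≤ c
  have hxc : x ≤ c := hxsc ▸ inf_le_right
  have hdx_c : T.dia x ≤ c := by
    have := hdia_mono x c hxc
    rwa [hc] at this
  have hyc : y ≤ c := le_trans (le_trans (hle_dia y) (hdxy ▸ hdx_c)) le_rfl
  -- y ≤ s
  have hys : y ≤ s := by
    rw [hsS]
    refine le_sInf fun u hu => ?_
    have huo : T.IsOp u := hS hu
    have hxu : x ≤ u := le_trans (hxsc ▸ inf_le_left : x ≤ s) (hsS ▸ sInf_le hu)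
    by_contra hyu
    -- y atom: y ⊓ u = ⊥, so y ≤ uᶜ
    have hyuc : y ≤ uᶜ := by
      rcases hy.le_iff.mp (inf_le_left : y ⊓ u ≤ y) with h' | h'
      · exact le_compl_iff_disjoint_right.mpr (disjoint_iff.mpr h')
      · exact absurd (h' ▸ inf_le_right) hyu
    -- uᶜ is closed
    have hucl : T.dia uᶜ = uᶜ := by
      unfold MTAlg.dia
      rw [compl_compl, huo]
    have : T.dia y ≤ uᶜ := by
      have := hdia_mono y uᶜ hyuc
      rwa [hucl] at this
    have hxuc : x ≤ uᶜ := le_trans (hle_dia x) (hdxy ▸ this)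
    have : x ≤ ⊥ := by
      have := le_inf hxu hxuc
      rwa [inf_compl_eq_bot] at this
    exact hx.1 (le_bot_iff.mp this)
  have : y ≤ x := hxsc ▸ le_inf hys hyc
  exact (hx.le_iff_eq hy.1).mp this
end

section
/- If (M, □) is a sober MT-algebra, then the topological space at(M) (with the topology τ) is a sober space: every irreducible closed subset (a nonempty closed set that is not the union of two proper closed subsets) is the closure of a unique point. -/
universe u

namespace MTAlg

variable {M : Type u} [CompleteBooleanAlgebra M] (T : MTAlg M)

theorem box_box' (a : M) : T.box (T.box a) = T.box a :=
  le_antisymm (T.box_le _) (T.box_idem a)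

theorem dia_mono' {a b : M} (h : a ≤ b) : T.dia a ≤ T.dia b :=
  compl_le_compl (T.box_mono (compl_le_compl h))

theorem le_dia' (a : M) : a ≤ T.dia a := by
  have h := compl_le_compl (T.box_le aᶜ)
  simpa [dia] using h

theorem isCl_dia' (a : M) : T.IsCl (T.dia a) := by
  simp [IsCl, dia, compl_compl, box_box']

theorem atom_le_compl {x b : M} (hx : IsAtom x) (h : ¬ x ≤ b) : x ≤ bᶜ := by
  rcases hx.le_iff.mp (inf_le_left : x ⊓ b ≤ x) with h' | h'
  · exact le_compl_iff_disjoint_right.mpr (disjoint_iff.mpr h')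
  · exact absurd (h' ▸ inf_le_right) h

theorem not_le_of_le_compl {x b : M} (hx : IsAtom x) (h : x ≤ bᶜ) : ¬ x ≤ b := by
  intro h2
  exact hx.1 (le_bot_iff.mp (by simpa using le_inf h2 h))

theorem isClosed_iff' (F : Set {z : M // IsAtom z}) :
    @IsClosed _ T.atomTopology F ↔ ∃ c : M, T.IsCl c ∧ F = eta c := by
  letI := T.atomTopology
  constructor
  · intro h
    have h' : ∃ a : M, T.IsOp a ∧ Fᶜ = eta a := h.isOpen_compl
    obtain ⟨a, ha, hFa⟩ := h'
    refine ⟨aᶜ, ?_, ?_⟩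
    · show T.dia aᶜ = aᶜ
      simp only [dia, compl_compl]
      exact congrArg compl ha
    · ext x
      constructor
      · intro hxF
        have : x ∉ Fᶜ := fun hc => hc hxF
        rw [hFa] at this
        exact atom_le_compl x.2 this
      · intro hx
        by_contra hc
        have : x ∈ Fᶜ := hc
        rw [hFa] at this
        exact not_le_of_le_compl x.2 hx this
  · rintro ⟨c, hc, rfl⟩
    have hop : IsOpen (eta c : Set {z : M // IsAtom z})ᶜ := by
      refine ⟨cᶜ, ?_, ?_⟩
      · show T.box cᶜ = cᶜ
        have : (T.box cᶜ)ᶜ = c := hc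
        calc T.box cᶜ = ((T.box cᶜ)ᶜ)ᶜ := (compl_compl _).symm
          _ = cᶜ := congrArg compl this
      · ext x
        constructor
        · intro hx
          exact atom_le_compl x.2 hx
        · intro hx
          exact not_le_of_le_compl x.2 hx
    exact ⟨hop⟩

theorem closure_singleton' (x : {z : M // IsAtom z}) :
    @closure _ T.atomTopology {x} = eta (T.dia x.1) := by
  letI := T.atomTopology
  apply Set.Subset.antisymm
  · refine closure_minimal ?_ ?_
    · intro y hy
      have hyx : y = x := hy
      rw [hyx]
      exact T.le_dia' x.1
    · exact (T.isClosed_iff' _).mpr ⟨T.dia x.1, T.isCl_dia' _, rfl⟩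
  · intro y hy
    obtain ⟨c, hc, hEq⟩ := (T.isClosed_iff' _).mp
      (isClosed_closure (s := ({x} : Set {z : M // IsAtom z})))
    have hx : x ∈ closure ({x} : Set {z : M // IsAtom z}) := subset_closure rfl
    rw [hEq] at hx ⊢
    have : T.dia x.1 ≤ c := hc ▸ T.dia_mono' hx
    exact le_trans hy this

theorem atoms_sep' (hT0 : T.T0) {x y : M} (hx : IsAtom x) (hy : IsAtom y)
    (hxy : x ≤ T.dia y) (hyx : y ≤ T.dia x) : x = y := by
  by_contra hne
  obtain ⟨B, hB, hBx⟩ := hT0 x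
  obtain ⟨w, hwB, hxw⟩ := MTAlg.atom_le_sSup hx hBx.le
  have hwx : w = x := le_antisymm (hBx ▸ le_sSup hwB) hxw
  obtain ⟨s, c, ⟨S, hS, hsS⟩, hccl, hwsc⟩ := hB hwB
  have hxsc : x = s ⊓ c := hwx ▸ hwsc
  have hyx' : ¬ y ≤ x := by
    intro h
    rcases hx.le_iff.mp h with h' | h'
    · exact hy.1 h'
    · exact hne h'.symm
  by_cases hyc : y ≤ c
  · by_cases hys : y ≤ s
    · exact hyx' (hxsc ▸ le_inf hys hyc)
    · rw [hsS] at hys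
      have : ∃ u ∈ S, ¬ y ≤ u := by
        by_contra hcon
        push_neg at hcon
        exact hys (le_sInf hcon)
      obtain ⟨u, huS, hyu⟩ := this
      have hxu : x ≤ u := le_trans (hxsc ▸ inf_le_left) (hsS ▸ sInf_le huS)
      have hyuc : y ≤ uᶜ := atom_le_compl hy hyu
      have hucl : T.IsCl uᶜ := by
        show T.dia uᶜ = uᶜ
        simp only [dia, compl_compl]
        exact congrArg compl (hS huS)
      have : T.dia y ≤ uᶜ := hucl ▸ T.dia_mono' hyuc
      exact not_le_of_le_compl hx (le_trans hxy this) hxu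
  · have hxc : x ≤ c := hxsc ▸ inf_le_right
    have : T.dia x ≤ c := hccl ▸ T.dia_mono' hxc
    exact hyc (le_trans hyx this)

end MTAlg



/-- if `M` is a sober MT-algebra, then the space of atoms of `M` is sober:
every nonempty closed set that is not the union of two proper closed subsets is the
closure of a unique point. -/
theorem statement7 {M : Type u} [CompleteBooleanAlgebra M] (T : MTAlg M)
    (hsob : T.Sober) :
    ∀ F : Set {z : M // IsAtom z},
      @IsClosed _ T.atomTopology F → F.Nonempty →
      (∀ F₁ F₂ : Set {z : M // IsAtom z}, @IsClosed _ T.atomTopology F₁ →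
        @IsClosed _ T.atomTopology F₂ → F = F₁ ∪ F₂ → F = F₁ ∨ F = F₂) →
      ∃! x : {z : M // IsAtom z}, F = @closure _ T.atomTopology {x} := by
  letI := T.atomTopology
  intro F hFcl hFne hirr
  obtain ⟨c, hccl, hFc⟩ := (T.isClosed_iff' F).mp hFcl
  set S : Set M := Subtype.val '' F with hS
  set p : M := T.dia (sSup S) with hp
  have hSc : sSup S ≤ c := by
    apply sSup_le
    rintro _ ⟨w, hwF, rfl⟩
    rw [hFc] at hwF
    exact hwF
  have hpc : p ≤ c := hccl ▸ T.dia_mono' hSc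
  have hFp : F = MTAlg.eta p := by
    apply Set.Subset.antisymm
    · intro z hz
      have hzS : (z : M) ∈ S := ⟨z, hz, rfl⟩
      exact le_trans (le_sSup hzS) (T.le_dia' _)
    · intro z hz
      rw [hFc]
      exact le_trans hz hpc
  have hpne : p ≠ ⊥ := by
    obtain ⟨z, hzF⟩ := hFne
    intro hbot
    have : (z : M) ≤ p := by rw [hFp] at hzF; exact hzF
    exact z.2.1 (le_bot_iff.mp (hbot ▸ this))
  have hji : T.JoinIrred p := by
    refine ⟨T.isCl_dia' _, hpne, ?_⟩
    intro a b hacl hbcl hpab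
    have hsplit : F = MTAlg.eta a ∪ MTAlg.eta b := by
      rw [hFp]
      ext z
      constructor
      · intro hz
        have hzab : (z : M) ≤ sSup {a, b} := by
          rw [sSup_pair, ← hpab]; exact hz
        obtain ⟨s, hs, hzs⟩ := MTAlg.atom_le_sSup z.2 hzab
        rcases hs with rfl | rfl
        · exact Or.inl hzs
        · exact Or.inr hzs
      · rintro (hz | hz)
        · exact le_trans hz (hpab ▸ le_sup_left)
        · exact le_trans hz (hpab ▸ le_sup_right)
    rcases hirr _ _ ((T.isClosed_iff' _).mpr ⟨a, hacl, rfl⟩)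
      ((T.isClosed_iff' _).mpr ⟨b, hbcl, rfl⟩) hsplit with hFa | hFb
    · left
      refine le_antisymm ?_ (hpab ▸ le_sup_left)
      have hSa : sSup S ≤ a := by
        apply sSup_le
        rintro _ ⟨w, hwF, rfl⟩
        rw [hFa] at hwF
        exact hwF
      exact hacl ▸ T.dia_mono' hSa
    · right
      refine le_antisymm ?_ (hpab ▸ le_sup_right)
      have hSb : sSup S ≤ b := by
        apply sSup_le
        rintro _ ⟨w, hwF, rfl⟩
        rw [hFb] at hwF
        exact hwF
      exact hbcl ▸ T.dia_mono' hSb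
  obtain ⟨x, hxat, hpx⟩ := hsob.1 p hji
  refine ⟨⟨x, hxat⟩, ?_, ?_⟩
  · show F = closure {(⟨x, hxat⟩ : {z : M // IsAtom z})}
    rw [T.closure_singleton', ← hpx]
    exact hFp
  · intro y hy
    rw [T.closure_singleton'] at hy
    have hxF : (⟨x, hxat⟩ : {z : M // IsAtom z}) ∈ F := by
      rw [hFp]
      exact hpx ▸ T.le_dia' x
    have hyF : y ∈ F := by
      rw [hy]
      exact T.le_dia' y.1
    have h1 : x ≤ T.dia y.1 := by rw [hy] at hxF; exact hxF
    have h2 : (y : M) ≤ T.dia x := by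
      rw [hFp] at hyF
      rw [hpx] at hyF
      exact hyF
    exact Subtype.ext (T.atoms_sep' hsob.2 y.2 hxat h2 h1)
end

section
/- If (M, □) is a T1-algebra, then the frame O(M) is subfit: for all a, b ∈ O(M) with a ≰ b there exists c ∈ O(M) such that a ⊔ c = ⊤ and b ⊔ c ≠ ⊤. -/
universe u

/-- if `M` is a `T₁`-algebra, then the frame `O(M)` is subfit. -/
theorem statement10 {M : Type u} [CompleteBooleanAlgebra M] (T : MTAlg M)
    (hT1 : T.T1) :
    ∀ a b : M, a ∈ T.opens → b ∈ T.opens → ¬ a ≤ b →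
      ∃ c ∈ T.opens, a ⊔ c = ⊤ ∧ b ⊔ c ≠ ⊤ := by
  intro a b ha hb hab
  have hne : a ⊓ bᶜ ≠ ⊥ := by
    intro h
    exact hab (sdiff_eq_bot_iff.mp (by rw [sdiff_eq]; exact h))
  obtain ⟨B, hB, hBeq⟩ := hT1 (a ⊓ bᶜ)
  have : ∃ k ∈ B, k ≠ ⊥ := by
    by_contra hc
    push_neg at hc
    apply hne
    rw [hBeq]
    exact sSup_eq_bot.mpr hc
  obtain ⟨k, hkB, hk0⟩ := this
  have hkcl : T.IsCl k := hB hkB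
  have hkle : k ≤ a ⊓ bᶜ := hBeq ▸ le_sSup hkB
  refine ⟨kᶜ, ?_, ?_, ?_⟩
  · show T.box kᶜ = kᶜ
    have : (T.box kᶜ)ᶜ = k := hkcl
    calc T.box kᶜ = ((T.box kᶜ)ᶜ)ᶜ := (compl_compl _).symm
      _ = kᶜ := by rw [this]
  · refine top_le_iff.mp ?_
    calc (⊤ : M) = k ⊔ kᶜ := (sup_compl_eq_top).symm
      _ ≤ a ⊔ kᶜ := sup_le_sup_right (hkle.trans inf_le_left) _
  · intro h
    have h2 : bᶜ ⊓ k = ⊥ := by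
      rw [← compl_compl k, ← compl_sup, h, compl_top]
    have hkb : k ≤ bᶜ := hkle.trans inf_le_right
    exact hk0 (le_bot_iff.mp (h2 ▸ le_inf hkb le_rfl))
end

section
/- An MT-algebra (M, □) is a T1-algebra if and only if M is a T_{1/2}-algebra and the frame O(M) is subfit. -/
universe u

section Aux

namespace MTAlg

variable {M : Type u} [CompleteBooleanAlgebra M] (T : MTAlg M)

theorem isCl_inf' {a b : M} (ha : T.IsCl a) (hb : T.IsCl b) : T.IsCl (a ⊓ b) := by
  refine le_antisymm (le_inf ?_ ?_) (T.le_dia' _)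
  · exact le_of_le_of_eq (T.dia_mono' inf_le_left) ha
  · exact le_of_le_of_eq (T.dia_mono' inf_le_right) hb

theorem isOp_compl_of_isCl {a : M} (ha : T.IsCl a) : T.IsOp aᶜ := by
  have : (T.box aᶜ)ᶜ = a := ha
  have h2 : (T.box aᶜ)ᶜᶜ = aᶜ := by rw [this]
  rwa [compl_compl] at h2

theorem isCl_compl_of_isOp {a : M} (ha : T.IsOp a) : T.IsCl aᶜ := by
  show (T.box aᶜᶜ)ᶜ = aᶜ
  rw [compl_compl, ha]

theorem compl_le_of_sup_eq_top' {a c : M} (h : a ⊔ c = ⊤) : cᶜ ≤ a := by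
  have h2 : cᶜ = cᶜ ⊓ (a ⊔ c) := by rw [h, inf_top_eq]
  rw [inf_sup_left, compl_inf_eq_bot, sup_bot_eq] at h2
  exact le_of_eq_of_le h2 inf_le_right

theorem le_compl_of_inf_eq_bot' {x k : M} (h : x ⊓ k = ⊥) : x ≤ kᶜ := by
  have h2 : x = x ⊓ (kᶜ ⊔ k) := by rw [compl_sup_eq_top, inf_top_eq]
  rw [inf_sup_left, h, sup_bot_eq] at h2
  exact le_of_eq_of_le h2 inf_le_right

theorem le_of_sup_compl_eq_top' {a c : M} (h : a ⊔ cᶜ = ⊤) : c ≤ a := by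
  have h2 := compl_le_of_sup_eq_top' (M := M) h
  rwa [compl_compl] at h2

theorem sup_compl_eq_top_of_le' {a c : M} (h : c ≤ a) : a ⊔ cᶜ = ⊤ := by
  rw [eq_top_iff, ← sup_compl_eq_top (x := c)]
  exact sup_le_sup_right h _

theorem exists_closed_of_subfit
    (hsub : ∀ a b : M, a ∈ T.opens → b ∈ T.opens → ¬ a ≤ b →
      ∃ c ∈ T.opens, a ⊔ c = ⊤ ∧ b ⊔ c ≠ ⊤)
    {u k : M} (hu : T.IsOp u) (hk : T.IsCl k) (hne : u ⊓ k ≠ ⊥) :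
    ∃ m : M, T.IsCl m ∧ m ≠ ⊥ ∧ m ≤ u ⊓ k := by
  have hbopen : T.IsOp (u ⊓ kᶜ) := by
    show T.box (u ⊓ kᶜ) = u ⊓ kᶜ
    rw [T.box_inf, hu, T.isOp_compl_of_isCl hk]
  have hnotle : ¬ u ≤ u ⊓ kᶜ := by
    intro h
    apply hne
    have h1 : u ≤ kᶜ := h.trans inf_le_right
    have h2 : u ⊓ k ≤ kᶜ ⊓ k := inf_le_inf_right k h1
    rw [compl_inf_eq_bot] at h2
    exact le_bot_iff.mp h2
  obtain ⟨c, hc, hac, hbc⟩ := hsub u (u ⊓ kᶜ) hu hbopen hnotle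
  refine ⟨cᶜ ⊓ k, T.isCl_inf' (T.isCl_compl_of_isOp hc) hk, ?_, ?_⟩
  · intro h0
    apply hbc
    have h1 : cᶜ ≤ kᶜ := le_compl_of_inf_eq_bot' h0
    have h2 : cᶜ ≤ u ⊓ kᶜ := le_inf (compl_le_of_sup_eq_top' hac) h1
    rw [eq_top_iff, ← compl_sup_eq_top (x := c)]
    exact sup_le_sup_right h2 _
  · exact inf_le_inf_right k (compl_le_of_sup_eq_top' hac)

end MTAlg

end Aux

/-- `M` is a `T₁`-algebra iff `M` is a `T_{1/2}`-algebra and the frame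
`O(M)` is subfit. -/
theorem statement11 {M : Type u} [CompleteBooleanAlgebra M] (T : MTAlg M) :
    T.T1 ↔ (T.THalf ∧
      ∀ a b : M, a ∈ T.opens → b ∈ T.opens → ¬ a ≤ b →
        ∃ c ∈ T.opens, a ⊔ c = ⊤ ∧ b ⊔ c ≠ ⊤) := by
  constructor
  · intro hT1
    refine ⟨fun a => ?_, fun a b ha hb hab => ?_⟩
    · obtain ⟨B, hB, rfl⟩ := hT1 a
      exact ⟨B, fun x hx => ⟨⊤, x, T.box_top, hB hx, (top_inf_eq x).symm⟩, rfl⟩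
    · have hne : a ⊓ bᶜ ≠ ⊥ := by
        intro h
        apply hab
        have : a = a ⊓ (b ⊔ bᶜ) := by rw [sup_compl_eq_top, inf_top_eq]
        rw [inf_sup_left, h, sup_bot_eq] at this
        exact le_of_eq_of_le this inf_le_right
      obtain ⟨B, hB, hsup⟩ := hT1 (a ⊓ bᶜ)
      have hex : ∃ m ∈ B, m ≠ ⊥ := by
        by_contra hc
        push_neg at hc
        exact hne (hsup.trans (sSup_eq_bot.mpr hc))
      obtain ⟨m, hmB, hm0⟩ := hex
      have hmcl : T.IsCl m := hB hmB
      have hm_le : m ≤ a ⊓ bᶜ := le_of_le_of_eq (le_sSup hmB) hsup.symm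
      refine ⟨mᶜ, T.isOp_compl_of_isCl hmcl, ?_, ?_⟩
      · exact MTAlg.sup_compl_eq_top_of_le' (hm_le.trans inf_le_left)
      · intro h
        apply hm0
        have h1 : m ≤ b := MTAlg.le_of_sup_compl_eq_top' h
        have h2 : m ≤ b ⊓ bᶜ := le_inf h1 (hm_le.trans inf_le_right)
        rw [inf_compl_eq_bot] at h2
        exact le_bot_iff.mp h2
  · rintro ⟨hhalf, hsub⟩
    intro a
    set t := sSup {m | T.IsCl m ∧ m ≤ a} with ht
    refine ⟨{m | T.IsCl m ∧ m ≤ a}, fun m hm => hm.1, ?_⟩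
    have ht_le : t ≤ a := sSup_le fun m hm => hm.2
    refine le_antisymm ?_ ht_le
    by_contra hnle
    have hr : a ⊓ tᶜ ≠ ⊥ := by
      intro h
      apply hnle
      have : a = a ⊓ (t ⊔ tᶜ) := by rw [sup_compl_eq_top, inf_top_eq]
      rw [inf_sup_left, h, sup_bot_eq] at this
      exact le_of_eq_of_le this inf_le_right
    obtain ⟨B, hB, hsup⟩ := hhalf (a ⊓ tᶜ)
    have hex : ∃ l ∈ B, l ≠ ⊥ := by
      by_contra hc
      push_neg at hc
      exact hr (hsup.trans (sSup_eq_bot.mpr hc))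
    obtain ⟨l, hlB, hl0⟩ := hex
    obtain ⟨u, k, hu, hk, hluk⟩ := hB hlB
    have hl_le : l ≤ a ⊓ tᶜ := le_of_le_of_eq (le_sSup hlB) hsup.symm
    have huk : u ⊓ k ≠ ⊥ := fun h => hl0 (hluk.trans h)
    obtain ⟨m, hmcl, hm0, hm_le⟩ := T.exists_closed_of_subfit hsub hu hk huk
    have hm_le_l : m ≤ l := le_of_le_of_eq hm_le hluk.symm
    have hm_t : m ≤ t := le_sSup ⟨hmcl, hm_le_l.trans (hl_le.trans inf_le_left)⟩
    have hm_tc : m ≤ tᶜ := hm_le_l.trans (hl_le.trans inf_le_right)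
    apply hm0
    have : m ≤ t ⊓ tᶜ := le_inf hm_t hm_tc
    rw [inf_compl_eq_bot] at this
    exact le_bot_iff.mp this
end

section
/- Every Hausdorff MT-algebra is sober; that is, if (M, □) is a Hausdorff MT-algebra, then M is a T0-algebra and every join-irreducible element of C(M) equals ◇x for some atom x of M. -/
universe u

namespace MTAlg

variable {M : Type u} [CompleteBooleanAlgebra M] (T : MTAlg M)

theorem dia_sup' (a b : M) : T.dia (a ⊔ b) = T.dia a ⊔ T.dia b := by
  simp [dia, compl_sup, T.box_inf, compl_inf]

theorem box_bot' : T.box ⊥ = ⊥ := le_bot_iff.mp (T.box_le ⊥)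

theorem isCl_top' : T.IsCl (⊤ : M) := by
  show T.dia ⊤ = ⊤
  simp [dia, T.box_bot']

theorem isOp_box' (a : M) : T.IsOp (T.box a) := T.box_box' a

theorem isGC_isSat {b : M} (h : T.IsGC b) : T.IsSat b := by
  refine ⟨{e | ∃ c : M, b ≤ T.box c ∧ e = T.box c}, ?_, ?_⟩
  · rintro e ⟨c, _, rfl⟩; exact T.isOp_box' c
  · apply le_antisymm
    · exact le_sInf (by rintro e ⟨c, hbc, rfl⟩; exact hbc)
    · rw [IsGC] at h
      nth_rewrite 2 [h]
      refine le_sInf ?_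
      rintro e ⟨c, hbc, rfl⟩
      exact le_trans (sInf_le ⟨c, hbc, rfl⟩) (T.le_dia' _)

theorem isGC_isWLC {b : M} (h : T.IsGC b) : T.IsWLC b :=
  ⟨b, ⊤, T.isGC_isSat h, T.isCl_top', (inf_top_eq b).symm⟩

/-- Key lemma: a nonzero GC element below a join-irreducible closed element equals it. -/
theorem irred_eq_gc {p b : M} (hp : T.JoinIrred p) (hb : T.IsGC b)
    (hb0 : b ≠ ⊥) (hbp : b ≤ p) : p = b := by
  refine le_antisymm ?_ hbp
  rw [hb]
  refine le_sInf ?_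
  rintro e ⟨c, hbc, rfl⟩
  -- decompose p
  have hdec : p = T.dia (p ⊓ T.box c) ⊔ T.dia (p ⊓ (T.box c)ᶜ) := by
    conv_lhs => rw [← hp.1]
    rw [← T.dia_sup']
    congr 1
    rw [← inf_sup_left, sup_compl_eq_top, inf_top_eq]
  rcases hp.2.2 _ _ (T.isCl_dia' _) (T.isCl_dia' _) hdec with h1 | h2
  · rw [h1]; exact T.dia_mono' inf_le_right
  · exfalso
    have hple : p ≤ (T.box c)ᶜ := by
      rw [h2]
      calc T.dia (p ⊓ (T.box c)ᶜ) ≤ T.dia ((T.box c)ᶜ) := T.dia_mono' inf_le_right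
        _ = (T.box c)ᶜ := by simp [dia, compl_compl, T.box_box']
    have : b ≤ ⊥ := by
      calc b ≤ T.box c ⊓ (T.box c)ᶜ := le_inf hbc (le_trans hbp hple)
        _ = ⊥ := inf_compl_eq_bot
    exact hb0 (le_bot_iff.mp this)

end MTAlg

/-- every Hausdorff MT-algebra is sober: it is a `T₀`-algebra and every
join-irreducible element of `C(M)` equals `◇x` for some atom `x`. -/
theorem statement12 {M : Type u} [CompleteBooleanAlgebra M] (T : MTAlg M)
    (hH : T.Hausdorff) :
    T.T0 ∧ ∀ p : M, T.JoinIrred p → ∃ x : M, IsAtom x ∧ p = T.dia x := by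
  constructor
  · -- T0: GC elements are weakly locally closed
    intro a
    obtain ⟨B, hB, ha⟩ := hH a
    exact ⟨B, fun b hb => T.isGC_isWLC (hB hb), ha⟩
  · intro p hp
    -- any nonzero element below p equals p
    have key : ∀ q : M, q ≤ p → q ≠ ⊥ → q = p := by
      intro q hqp hq0
      obtain ⟨B, hB, hq⟩ := hH q
      have : ∃ b ∈ B, b ≠ ⊥ := by
        by_contra hc
        push_neg at hc
        apply hq0
        rw [hq, sSup_eq_bot]
        intro b hb
        exact of_not_not (fun h => h (hc b hb))
      obtain ⟨b, hbB, hb0⟩ := this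
      have hbq : b ≤ q := hq ▸ le_sSup hbB
      have := T.irred_eq_gc hp (hB hbB) hb0 (le_trans hbq hqp)
      exact le_antisymm hqp (this ▸ hbq)
    refine ⟨p, ⟨hp.2.1, ?_⟩, hp.1.symm⟩
    intro q hq
    by_contra hq0
    exact absurd (key q hq.le hq0) hq.ne
end

section
/- If (M, □) is a Hausdorff MT-algebra, then O(M) is a Hausdorff frame: for every a ∈ O(M) with a ≠ ⊤, a = ⨆ {u ∈ O(M) | u ≤ a and u* ≰ a}, where u* denotes the pseudocomplement of u in the frame O(M). -/
universe u

/-- if `M` is a Hausdorff MT-algebra, then `O(M)` is a Hausdorff frame: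
for every open `a ≠ ⊤`, `a = ⨆ {u ∈ O(M) | u ≤ a and u* ≰ a}`, where the
pseudocomplement in `O(M)` is `u* = □(uᶜ)`. -/
theorem statement13 {M : Type u} [CompleteBooleanAlgebra M] (T : MTAlg M)
    (hH : T.Hausdorff) :
    ∀ a : M, a ∈ T.opens → a ≠ ⊤ →
      a = sSup {u | u ∈ T.opens ∧ u ≤ a ∧ ¬ T.box uᶜ ≤ a} := by
  intro a ha hne
  refine le_antisymm ?_ (sSup_le fun u hu => hu.2.1)
  obtain ⟨B, hB, hab⟩ := hH a
  conv_lhs => rw [hab]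
  apply sSup_le
  intro g hg
  have hga : g ≤ a := hab ▸ le_sSup hg
  obtain ⟨B', hB', hab'⟩ := hH aᶜ
  have hex : ∃ h ∈ B', h ≠ ⊥ := by
    by_contra hc
    push_neg at hc
    have : aᶜ = ⊥ := hab'.trans (sSup_eq_bot.mpr hc)
    exact hne (by simpa [compl_eq_bot] using this)
  obtain ⟨h, hhB, hh0⟩ := hex
  have hha : h ≤ aᶜ := hab' ▸ le_sSup hhB
  have hgGC : T.IsGC g := hB hg
  have hnot : ¬ h ≤ g := by
    intro hle
    apply hh0
    have : h ≤ a ⊓ aᶜ := le_inf (hle.trans hga) hha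
    simpa using this
  have hexc : ∃ c, g ≤ T.box c ∧ ¬ h ≤ T.dia (T.box c) := by
    by_contra hc
    push_neg at hc
    apply hnot
    rw [hgGC]
    apply le_sInf
    rintro b ⟨c, hgc, rfl⟩
    exact hc c hgc
  obtain ⟨c, hgc, hhc⟩ := hexc
  set u := T.box c with hu_def
  have hu : T.IsOp u := le_antisymm (T.box_le _) (T.box_idem c)
  have hw : T.IsOp (u ⊓ a) := by
    show T.box _ = _
    rw [T.box_inf, hu, ha]
  have hstar : ¬ T.box (u ⊓ a)ᶜ ≤ a := by
    intro hcon
    apply hhc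
    have h1 : T.box uᶜ ≤ a :=
      le_trans (T.box_mono (compl_le_compl inf_le_left)) hcon
    calc h ≤ aᶜ := hha
      _ ≤ (T.box uᶜ)ᶜ := compl_le_compl h1
  exact le_trans (le_inf hgc hga) (le_sSup ⟨hw, inf_le_right, hstar⟩)
end

section
/- Every spatial Hausdorff frame is subfit: if L is a frame that is spatial and Hausdorff, then for all a, b ∈ L with a ≰ b there exists c ∈ L with a ⊔ c = ⊤ and b ⊔ c ≠ ⊤. -/
universe u

/-- The pseudocomplement `a* = ⨆ {b | b ⊓ a = ⊥}` in a frame. -/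
def framePstar {L : Type u} [Order.Frame L] (a : L) : L := sSup {b | b ⊓ a = ⊥}

/-- A completely prime filter of a frame `L`: a proper filter such that whenever a
supremum of a family of elements belongs to it, some member of the family does. -/
structure IsCPFrm {L : Type u} [Order.Frame L] (p : Set L) : Prop where
  top_mem : ⊤ ∈ p
  bot_notMem : ⊥ ∉ p
  mem_of_le : ∀ a ∈ p, ∀ b : L, a ≤ b → b ∈ p
  inf_mem : ∀ a ∈ p, ∀ b ∈ p, a ⊓ b ∈ p
  prime : ∀ S : Set L, sSup S ∈ p → ∃ s ∈ S, s ∈ p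

/-- every spatial Hausdorff frame is subfit. -/
theorem statement14 {L : Type u} [Order.Frame L]
    (hspatial : ∀ a b : L, ¬ a ≤ b → ∃ p : Set L, IsCPFrm p ∧ a ∈ p ∧ b ∉ p)
    (hHausdorff : ∀ a : L, a ≠ ⊤ → a = sSup {u | u ≤ a ∧ ¬ framePstar u ≤ a}) :
    ∀ a b : L, ¬ a ≤ b → ∃ c : L, a ⊔ c = ⊤ ∧ b ⊔ c ≠ ⊤ := by
  intro a b hab
  obtain ⟨p, hp, hap, hbp⟩ := hspatial a b hab
  set c := sSup {x : L | x ∉ p} with hc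
  have hcp : c ∉ p := by
    intro h
    obtain ⟨s, hs, hsp⟩ := hp.prime _ h
    exact hs hsp
  refine ⟨c, ?_, ?_⟩
  · by_contra htop
    have ht := hHausdorff (a ⊔ c) htop
    have htp : a ⊔ c ∈ p := hp.mem_of_le a hap _ le_sup_left
    rw [ht] at htp
    obtain ⟨u, ⟨hut, hust⟩, hup⟩ := hp.prime _ htp
    have husp : framePstar u ∈ p := by
      by_contra h
      exact hust (le_trans (le_sSup h) le_sup_right)
    have hmem : u ⊓ framePstar u ∈ p := hp.inf_mem _ hup _ husp
    have hbot : u ⊓ framePstar u = ⊥ := by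
      rw [framePstar, inf_sSup_eq]
      refine iSup₂_eq_bot.mpr fun v hv => ?_
      rw [inf_comm]; exact hv
    rw [hbot] at hmem
    exact hp.bot_notMem hmem
  · intro h
    have hbc : b ⊔ c = c := sup_eq_right.mpr (le_sSup hbp)
    rw [hbc] at h
    exact hcp (h ▸ hp.top_mem)
end

section
/- Every regular (T3) MT-algebra is a Hausdorff (T2) MT-algebra. -/
universe u

namespace MTAlg

variable {M : Type u} [CompleteBooleanAlgebra M] (T : MTAlg M)

theorem isGC_of_isCl {c : M} (hreg : T.Regular) (hc : T.IsCl c) : T.IsGC c := by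
  have hbox : T.box cᶜ = cᶜ := by
    have := congrArg compl hc
    simpa [dia] using this
  have hop : T.IsOp cᶜ := hbox
  refine le_antisymm ?_ ?_
  · refine le_sInf ?_
    rintro b ⟨d, hcd, rfl⟩
    exact hcd.trans (T.le_dia' _)
  · rw [← compl_le_compl_iff_le]
    have hr := hreg.2 cᶜ hop
    rw [hr]
    refine sSup_le ?_
    rintro b ⟨hbop, htri⟩
    have hs : T.dia (T.box bᶜ) ∈ {b | ∃ d : M, c ≤ T.box d ∧ b = T.dia (T.box d)} := by
      refine ⟨bᶜ, ?_, rfl⟩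
      have h1 : T.dia b ≤ cᶜ := htri.trans (le_of_eq hbox)
      simpa [dia] using compl_le_compl h1
    have hle : sInf {b | ∃ d : M, c ≤ T.box d ∧ b = T.dia (T.box d)} ≤ T.dia (T.box bᶜ) :=
      sInf_le hs
    have hbd : b ≤ (T.dia (T.box bᶜ))ᶜ := by
      have : T.dia (T.box bᶜ) = (T.box (T.dia b))ᶜ := by
        simp [dia]
      rw [this, compl_compl]
      calc b = T.box b := hbop.symm
        _ ≤ T.box (T.dia b) := T.box_mono (T.le_dia' b)
    exact hbd.trans (compl_le_compl hle)

end MTAlg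

/-- every regular (T₃) MT-algebra is a Hausdorff (T₂) MT-algebra. -/
theorem statement15 {M : Type u} [CompleteBooleanAlgebra M] (T : MTAlg M)
    (hreg : T.Regular) : T.Hausdorff := by
  intro a
  obtain ⟨B, hB, rfl⟩ := hreg.1 a
  exact ⟨B, fun b hb => T.isGC_of_isCl hreg (hB hb), rfl⟩
end

section
/- Every normal (T4) MT-algebra is a regular (T3) MT-algebra. -/
universe u

/-- every normal (T₄) MT-algebra is a regular (T₃) MT-algebra. -/
theorem statement17 {M : Type u} [CompleteBooleanAlgebra M] (T : MTAlg M)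
    (hN : T.Normal) : T.Regular := by
  obtain ⟨hT1, hn⟩ := hN
  refine ⟨hT1, fun a ha => ?_⟩
  apply le_antisymm
  · obtain ⟨B, hB, hEq⟩ := hT1 a
    conv_lhs => rw [hEq]
    apply sSup_le
    intro c hc
    have hcCl : T.IsCl c := hB hc
    have hca : c ≤ a := by rw [hEq]; exact le_sSup hc
    have hacl : T.IsCl aᶜ := by
      unfold MTAlg.IsCl MTAlg.dia
      rw [compl_compl, ha]
    have hdisj : c ⊓ aᶜ = ⊥ := by
      have := inf_le_inf_right aᶜ hca
      simpa using this
    obtain ⟨u, v, hu, hv, huv, hcu, hav⟩ := hn c aᶜ hcCl hacl hdisj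
    refine le_trans hcu (le_sSup ⟨hu, ?_⟩)
    unfold MTAlg.tri MTAlg.dia
    have h1 : v ≤ uᶜ := by
      rw [le_compl_iff_disjoint_right]
      rw [← inf_comm] at huv
      exact disjoint_iff.mpr huv
    have h2 : (T.box uᶜ)ᶜ ≤ vᶜ := by
      apply compl_le_compl
      calc v = T.box v := hv.symm
        _ ≤ T.box uᶜ := T.box_mono h1
    have h3 : vᶜ ≤ a := by rwa [compl_le_iff_compl_le] at hav
    calc (T.box uᶜ)ᶜ ≤ vᶜ := h2
      _ ≤ a := h3
      _ = T.box a := ha.symm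
  · apply sSup_le
    rintro b ⟨hb, htri⟩
    calc b ≤ (T.box bᶜ)ᶜ := by
          rw [le_compl_iff_disjoint_right, ← le_compl_iff_disjoint_left]
          exact T.box_le bᶜ
      _ ≤ T.box a := htri
      _ ≤ a := T.box_le a
end
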